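/- Let Ω ⊆ ℝ³ be a bounded open set and b a boundary point of Ω satisfying the exterior Lipschitz graph condition at b, and let B ⊆ ℝ³ be a bounded open set with closure(Ω) ⊆ B. Then there exist constants C > 0 and ε > 0 such that for every x ∈ Ω with ‖x − b‖ < ε, ∫_{B ∖ closure(Ω)} ‖z − x‖⁻⁴ dz ≤ C · ‖x − b‖ · ∫_{ℝ³ ∖ closure(Ω)} ‖z − x‖⁻⁶ dz. (The intermediate estimate, obtained via Hölder's inequality together with (B.4), in the proof of (B.5) of Lemma B.2.) -/

import Mathlib

open MeasureTheory Filter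
open scoped ENNReal Topology

noncomputable section

/-- The identification of `ℝ² × ℝ` with `ℝ³`: `(s, t) ↦ (s₁, s₂, t)`. -/
def emb (s : EuclideanSpace ℝ (Fin 2)) (t : ℝ) : EuclideanSpace ℝ (Fin 3) :=
  (EuclideanSpace.equiv (Fin 3) ℝ).symm ![s 0, s 1, t]

/-- The exterior Lipschitz graph condition at a boundary point `b` of `Ω ⊆ ℝ³`. -/
def ExtLipschitzGraphCond (Ω : Set (EuclideanSpace ℝ (Fin 3)))
    (b : EuclideanSpace ℝ (Fin 3)) : Prop :=
  ∃ δ > (0 : ℝ), ∃ A : EuclideanSpace ℝ (Fin 3) ≃ₗᵢ[ℝ] EuclideanSpace ℝ (Fin 3),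
    ∃ φ : EuclideanSpace ℝ (Fin 2) → ℝ, ∃ L : NNReal, LipschitzWith L φ ∧ φ 0 = 0 ∧
      ∀ (s : EuclideanSpace ℝ (Fin 2)) (t : ℝ), φ s < t → ‖s‖ ^ 2 + t ^ 2 < δ ^ 2 →
        b + A (emb s t) ∈ (closure Ω)ᶜ

/-!
Write `r = ‖x - b‖` and `U = (closure Ω)ᶜ`. In graph coordinates, the point at height `2 r` above
`b` is the centre of a ball of radius `r / (1 + L)` that lies above the Lipschitz graph, hence in
`U`, and within distance `4 r` of `x`; so `∫_U ‖z - x‖⁻⁶ ≳ r⁻³`. Split `∫_U ‖z - x‖⁻⁴` at radius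
`r` around `x`: inside, `‖z - x‖⁻⁴ ≤ r² ‖z - x‖⁻⁶`; outside, the integral over all of
`(closedBall x r)ᶜ` is `3 |B₁| / r = r² · O(r⁻³)` (polar coordinates). Both parts are therefore
`O(r²) ∫_U ‖z - x‖⁻⁶`, and `r² ≤ ε r`.
-/

open Metric Set Module

section RadialProfile

variable {r : ℝ} {d n : ℕ}

lemma eqOn_pow_mul_indicator_one_div_pow (hd : 1 ≤ d) :
    EqOn (fun y => y ^ (d - 1) * (Ioi r).indicator (fun y => 1 / y ^ n) y)
      ((Ioi r).indicator fun y => y ^ ((d : ℝ) - 1 - n)) (Ioi 0) := by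
  intro y (hy : 0 < y)
  by_cases hyr : y ∈ Ioi r
  · simp only [indicator_of_mem hyr, Real.rpow_sub hy, ← Real.rpow_natCast, Nat.cast_sub hd,
      Nat.cast_one]
    ring
  · simp [indicator_of_notMem hyr]

lemma integrableOn_pow_mul_indicator_one_div_pow (hr : 0 < r) (hd : 1 ≤ d) (hdn : d < n) :
    IntegrableOn (fun y => y ^ (d - 1) * (Ioi r).indicator (fun y => 1 / y ^ n) y) (Ioi 0) := by
  rw [integrableOn_congr_fun (eqOn_pow_mul_indicator_one_div_pow hd) measurableSet_Ioi,
    integrableOn_indicator_iff measurableSet_Ioi, inter_eq_left.2 (Ioi_subset_Ioi hr.le)]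
  have hdn' : (d : ℝ) < n := Nat.cast_lt.2 hdn
  exact integrableOn_Ioi_rpow_of_lt (by linarith) hr

lemma integral_pow_mul_indicator_one_div_pow (hr : 0 < r) (hd : 1 ≤ d) (hdn : d < n) :
    ∫ y in Ioi 0, y ^ (d - 1) * (Ioi r).indicator (fun y => 1 / y ^ n) y =
      r ^ ((d : ℝ) - n) / (n - d) := by
  have hdn' : (d : ℝ) < n := Nat.cast_lt.2 hdn
  rw [setIntegral_congr_fun measurableSet_Ioi (eqOn_pow_mul_indicator_one_div_pow hd),
    setIntegral_indicator measurableSet_Ioi, inter_eq_right.2 (Ioi_subset_Ioi hr.le),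
    integral_Ioi_rpow_of_lt (by linarith) hr, show (d : ℝ) - 1 - n + 1 = d - n by ring, neg_div,
    ← div_neg, neg_sub]

end RadialProfile

section RadialIntegrals

variable {E : Type*} [NormedAddCommGroup E] [MeasurableSpace E] [BorelSpace E]

theorem setLIntegral_inter_closedBall_one_div_norm_sub_pow_le (μ : Measure E) (S : Set E) (x : E)
    {r : ℝ} (hr : 0 ≤ r) {m : ℕ} (hm : m ≠ 0) (k : ℕ) :
    ∫⁻ z in S ∩ closedBall x r, ENNReal.ofReal (1 / ‖z - x‖ ^ m) ∂μ ≤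
      ENNReal.ofReal (r ^ k) * ∫⁻ z in S, ENNReal.ofReal (1 / ‖z - x‖ ^ (m + k)) ∂μ := by
  have hpointwise : ∀ z ∈ S ∩ closedBall x r,
      1 / ‖z - x‖ ^ m ≤ r ^ k * (1 / ‖z - x‖ ^ (m + k)) := by
    rintro z ⟨-, hz⟩
    rw [mem_closedBall, dist_eq_norm] at hz
    rcases (norm_nonneg (z - x)).eq_or_lt with h0 | hpos
    · simp [← h0, hm]
    · rw [pow_add, mul_one_div, le_div_iff₀ (by positivity), one_div_mul_eq_div,
        mul_div_cancel_left₀ _ (by positivity)]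
      exact pow_le_pow_left₀ hpos.le hz k
  calc ∫⁻ z in S ∩ closedBall x r, ENNReal.ofReal (1 / ‖z - x‖ ^ m) ∂μ
      ≤ ∫⁻ z in S ∩ closedBall x r, ENNReal.ofReal (r ^ k) *
          ENNReal.ofReal (1 / ‖z - x‖ ^ (m + k)) ∂μ := by
        refine setLIntegral_mono (by fun_prop) fun z hz => ?_
        rw [← ENNReal.ofReal_mul (by positivity)]
        exact ENNReal.ofReal_le_ofReal (hpointwise z hz)
    _ ≤ ENNReal.ofReal (r ^ k) *
          ∫⁻ z in S, ENNReal.ofReal (1 / ‖z - x‖ ^ (m + k)) ∂μ := by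
        rw [lintegral_const_mul' _ _ ENNReal.ofReal_ne_top]
        exact mul_le_mul_right (lintegral_mono_set inter_subset_left) _

variable [NormedSpace ℝ E] [FiniteDimensional ℝ E] [Nontrivial E]
  (μ : Measure E) [μ.IsAddHaarMeasure]

theorem ofReal_mul_measure_ball_le_setLIntegral_one_div_norm_sub_pow {S : Set E} {x p : E}
    {ρ R : ℝ} (hρ : 0 ≤ ρ) (hxS : x ∉ S) (hpS : ball p ρ ⊆ S)
    (hpx : ball p ρ ⊆ closedBall x R) (n : ℕ) :
    ENNReal.ofReal (ρ ^ finrank ℝ E / R ^ n) * μ (ball 0 1) ≤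
      ∫⁻ z in S, ENNReal.ofReal (1 / ‖z - x‖ ^ n) ∂μ :=
  calc ENNReal.ofReal (ρ ^ finrank ℝ E / R ^ n) * μ (ball 0 1)
      = ∫⁻ _ in ball p ρ, ENNReal.ofReal (1 / R ^ n) ∂μ := by
        rw [setLIntegral_const, μ.addHaar_ball _ hρ, ← mul_assoc,
          ← ENNReal.ofReal_mul' (by positivity), one_div_mul_eq_div]
    _ ≤ ∫⁻ z in ball p ρ, ENNReal.ofReal (1 / ‖z - x‖ ^ n) ∂μ := by
        refine setLIntegral_mono (by fun_prop) fun z hz => ENNReal.ofReal_le_ofReal ?_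
        have hzx : 0 < ‖z - x‖ := norm_pos_iff.2 (sub_ne_zero.2 fun h => hxS (h ▸ hpS hz))
        have hzR : ‖z - x‖ ≤ R := by simpa [dist_eq_norm] using hpx hz
        gcongr
    _ ≤ ∫⁻ z in S, ENNReal.ofReal (1 / ‖z - x‖ ^ n) ∂μ := lintegral_mono_set hpS

theorem setLIntegral_compl_closedBall_one_div_norm_sub_pow (x : E) {r : ℝ} (hr : 0 < r) {n : ℕ}
    (hn : finrank ℝ E < n) :
    ∫⁻ z in (closedBall x r)ᶜ, ENNReal.ofReal (1 / ‖z - x‖ ^ n) ∂μ =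
      ENNReal.ofReal (finrank ℝ E / (n - finrank ℝ E) * r ^ ((finrank ℝ E : ℝ) - n)) *
        μ (ball 0 1) := by
  set f : ℝ → ℝ := (Ioi r).indicator fun y => 1 / y ^ n
  have hf : ∀ z : E, ENNReal.ofReal (f ‖z - x‖) =
      (closedBall x r)ᶜ.indicator (fun z => ENNReal.ofReal (1 / ‖z - x‖ ^ n)) z := by
    intro z
    by_cases hz : r < ‖z - x‖
    · have hz' : z ∈ (closedBall x r)ᶜ := by simpa [dist_eq_norm] using hz
      simp [f, hz, hz']
    · have hz' : z ∉ (closedBall x r)ᶜ := by simpa [dist_eq_norm] using hz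
      simp [f, hz, hz']
  have hd : 1 ≤ finrank ℝ E := finrank_pos
  calc ∫⁻ z in (closedBall x r)ᶜ, ENNReal.ofReal (1 / ‖z - x‖ ^ n) ∂μ
      = ∫⁻ z, ENNReal.ofReal (f ‖z - x‖) ∂μ := by
        simp only [hf, lintegral_indicator measurableSet_closedBall.compl]
    _ = ∫⁻ z, ENNReal.ofReal (f ‖z‖) ∂μ :=
        lintegral_sub_right_eq_self (fun z => ENNReal.ofReal (f ‖z‖)) x
    _ = ENNReal.ofReal (∫ z, f ‖z‖ ∂μ) := by
        refine (ofReal_integral_eq_lintegral_ofReal ((integrable_fun_norm_addHaar μ).2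
          (integrableOn_pow_mul_indicator_one_div_pow hr hd hn)) (.of_forall fun z => ?_)).symm
        exact indicator_nonneg (fun y (hy : r < y) => by have := hr.trans hy; positivity) _
    _ = _ := by
        simp only [integral_fun_norm_addHaar μ f, smul_eq_mul]
        rw [integral_pow_mul_indicator_one_div_pow hr hd hn, nsmul_eq_mul, measureReal_def,
          ← ENNReal.ofReal_toReal measure_ball_lt_top.ne,
          ← ENNReal.ofReal_mul' ENNReal.toReal_nonneg,
          ENNReal.toReal_ofReal ENNReal.toReal_nonneg]
        congr 1
        ring

end RadialIntegrals

lemma emb_sub (s s' : EuclideanSpace ℝ (Fin 2)) (t t' : ℝ) :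
    emb s t - emb s' t' = emb (s - s') (t - t') := by
  ext i
  fin_cases i <;> rfl

lemma exists_emb_eq (w : EuclideanSpace ℝ (Fin 3)) : ∃ s t, emb s t = w :=
  ⟨!₂[w 0, w 1], w 2, by ext i; fin_cases i <;> rfl⟩

lemma norm_emb_sq (s : EuclideanSpace ℝ (Fin 2)) (t : ℝ) :
    ‖emb s t‖ ^ 2 = ‖s‖ ^ 2 + t ^ 2 := by
  simp [EuclideanSpace.norm_sq_eq, Fin.sum_univ_three, Fin.sum_univ_two, emb]

lemma norm_le_norm_emb (s : EuclideanSpace ℝ (Fin 2)) (t : ℝ) : ‖s‖ ≤ ‖emb s t‖ :=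
  (pow_le_pow_iff_left₀ (norm_nonneg _) (norm_nonneg _) two_ne_zero).1 <| by
    rw [norm_emb_sq]; nlinarith [sq_nonneg t]

lemma abs_le_norm_emb (s : EuclideanSpace ℝ (Fin 2)) (t : ℝ) : |t| ≤ ‖emb s t‖ :=
  (pow_le_pow_iff_left₀ (abs_nonneg _) (norm_nonneg _) two_ne_zero).1 <| by
    rw [norm_emb_sq, sq_abs]; nlinarith [sq_nonneg ‖s‖]

lemma norm_emb_zero_left (t : ℝ) : ‖emb 0 t‖ = |t| :=
  (sq_eq_sq₀ (norm_nonneg _) (abs_nonneg _)).1 <| by rw [norm_emb_sq, sq_abs, norm_zero]; ring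

theorem LipschitzWith.lt_of_norm_emb_sub_lt {φ : EuclideanSpace ℝ (Fin 2) → ℝ} {L : NNReal}
    (hφ : LipschitzWith L φ) (hφ0 : φ 0 = 0) {h t : ℝ} {s : EuclideanSpace ℝ (Fin 2)}
    (hst : ‖emb s t - emb 0 h‖ < h / (1 + L)) : φ s < t := by
  rw [emb_sub, sub_zero] at hst
  have hs : ‖s‖ < h / (1 + L) := (norm_le_norm_emb s (t - h)).trans_lt hst
  have ht : |t - h| < h / (1 + L) := (abs_le_norm_emb s (t - h)).trans_lt hst
  have hφs : φ s ≤ L * ‖s‖ := (le_abs_self _).trans (hφ.norm_le_mul hφ0 s)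
  have hLs : (L : ℝ) * ‖s‖ ≤ L * (h / (1 + L)) := by gcongr
  have hρ : (1 + L) * (h / (1 + L)) = h := mul_div_cancel₀ _ (by positivity)
  linarith [(abs_lt.1 ht).1]

theorem ExtLipschitzGraphCond.exists_ball_subset_compl_closure
    {Ω : Set (EuclideanSpace ℝ (Fin 3))} {b : EuclideanSpace ℝ (Fin 3)}
    (h : ExtLipschitzGraphCond Ω b) :
    ∃ δ > 0, ∃ κ > 0, κ ≤ 1 ∧ ∀ r, 0 < r → r < δ →
      ∃ p, ‖p - b‖ = 2 * r ∧ ball p (κ * r) ⊆ (closure Ω)ᶜ := by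
  obtain ⟨δ, hδ, A, φ, L, hφ, hφ0, hgraph⟩ := h
  have hκ1 : 1 / (1 + (L : ℝ)) ≤ 1 := div_le_one_of_le₀ (by simp) (by positivity)
  refine ⟨δ / 3, by positivity, 1 / (1 + L), by positivity, hκ1, fun r hr hrδ =>
    ⟨b + A (emb 0 (2 * r)), ?_, fun z hz => ?_⟩⟩
  · rw [add_sub_cancel_left, A.norm_map, norm_emb_zero_left, abs_of_pos (by positivity)]
  obtain ⟨s, t, hst⟩ := exists_emb_eq (A.symm (z - b))
  have hz_eq : z = b + A (emb s t) := by rw [hst, A.apply_symm_apply, add_sub_cancel]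
  have hzp : ‖emb s t - emb 0 (2 * r)‖ < 1 / (1 + L) * r := by
    rwa [mem_ball, dist_eq_norm, hz_eq, add_sub_add_left_eq_sub, ← map_sub, A.norm_map] at hz
  have hκr : 1 / (1 + L) * r ≤ r := mul_le_of_le_one_left hr.le hκ1
  rw [hz_eq]
  refine hgraph s t (hφ.lt_of_norm_emb_sub_lt hφ0 (hzp.trans_le ?_)) ?_
  · rw [one_div_mul_eq_div]
    gcongr
    linarith
  · have hnorm : ‖emb s t‖ < δ := calc
      ‖emb s t‖ ≤ ‖emb 0 (2 * r)‖ + ‖emb s t - emb 0 (2 * r)‖ :=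
        norm_le_norm_add_norm_sub' _ _
      _ < 2 * r + r := by
        rw [norm_emb_zero_left, abs_of_pos (by positivity)]
        linarith
      _ < δ := by linarith
    rw [← norm_emb_sq]
    exact pow_lt_pow_left₀ hnorm (norm_nonneg _) two_ne_zero

theorem setLIntegral_one_div_norm_sub_pow_four_le {S : Set (EuclideanSpace ℝ (Fin 3))}
    {x p : EuclideanSpace ℝ (Fin 3)} {r κ : ℝ} (hr : 0 < r) (hκ : 0 < κ) (hκ1 : κ ≤ 1)
    (hxS : x ∉ S) (hpx : ‖p - x‖ ≤ 3 * r) (hpS : ball p (κ * r) ⊆ S) :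
    ∫⁻ z in S, ENNReal.ofReal (1 / ‖z - x‖ ^ 4) ≤
      ENNReal.ofReal ((1 + 3 * 4 ^ 6 / κ ^ 3) * r ^ 2) *
        ∫⁻ z in S, ENNReal.ofReal (1 / ‖z - x‖ ^ 6) := by
  set I := ∫⁻ z in S, ENNReal.ofReal (1 / ‖z - x‖ ^ 6)
  set V := volume (ball (0 : EuclideanSpace ℝ (Fin 3)) 1)
  have hnear := setLIntegral_inter_closedBall_one_div_norm_sub_pow_le volume S x hr.le
    (m := 4) (by norm_num) 2
  have hfar : ∫⁻ z in (closedBall x r)ᶜ, ENNReal.ofReal (1 / ‖z - x‖ ^ 4) =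
      ENNReal.ofReal (3 / r) * V := by
    rw [setLIntegral_compl_closedBall_one_div_norm_sub_pow volume x hr (by simp),
      finrank_euclideanSpace_fin]
    congr 2
    norm_num [Real.rpow_neg_one, div_eq_mul_inv]
  have hpx' : ball p (κ * r) ⊆ closedBall x (4 * r) := fun z hz => by
    rw [mem_ball, dist_eq_norm] at hz
    rw [mem_closedBall, dist_eq_norm]
    nlinarith [norm_sub_le_norm_sub_add_norm_sub z p x]
  have hlow := ofReal_mul_measure_ball_le_setLIntegral_one_div_norm_sub_pow volume
    (by positivity) hxS hpS hpx' 6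
  rw [finrank_euclideanSpace_fin] at hlow
  calc ∫⁻ z in S, ENNReal.ofReal (1 / ‖z - x‖ ^ 4)
      ≤ ∫⁻ z in (S ∩ closedBall x r) ∪ (closedBall x r)ᶜ,
          ENNReal.ofReal (1 / ‖z - x‖ ^ 4) :=
        lintegral_mono_set fun z hz => (em (z ∈ closedBall x r)).imp (⟨hz, ·⟩) id
    _ ≤ ENNReal.ofReal (r ^ 2) * I + ENNReal.ofReal (3 / r) * V :=
        (lintegral_union_le _ _ _).trans (add_le_add hnear hfar.le)
    _ = ENNReal.ofReal (r ^ 2) * I + ENNReal.ofReal (3 * 4 ^ 6 / κ ^ 3 * r ^ 2) *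
          (ENNReal.ofReal ((κ * r) ^ 3 / (4 * r) ^ 6) * V) := by
        rw [← mul_assoc, ← ENNReal.ofReal_mul (by positivity)]
        congr 3
        field_simp
    _ ≤ ENNReal.ofReal (r ^ 2) * I + ENNReal.ofReal (3 * 4 ^ 6 / κ ^ 3 * r ^ 2) * I := by
        gcongr
    _ = ENNReal.ofReal ((1 + 3 * 4 ^ 6 / κ ^ 3) * r ^ 2) * I := by
        rw [← add_mul, ← ENNReal.ofReal_add (by positivity) (by positivity)]
        congr 2
        ring

theorem intermediate_estimate_B5_general (Ω : Set (EuclideanSpace ℝ (Fin 3))) (hΩo : IsOpen Ω)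
    (b : EuclideanSpace ℝ (Fin 3)) (hb : b ∈ frontier Ω)
    (hcond : ExtLipschitzGraphCond Ω b)
    (B : Set (EuclideanSpace ℝ (Fin 3))) :
    ∃ C > (0 : ℝ), ∃ ε > (0 : ℝ), ∀ x ∈ Ω, ‖x - b‖ < ε →
      (∫⁻ z in B \ closure Ω, ENNReal.ofReal (1 / ‖z - x‖ ^ 4)) ≤
        ENNReal.ofReal (C * ‖x - b‖) *
          ∫⁻ z in (closure Ω)ᶜ, ENNReal.ofReal (1 / ‖z - x‖ ^ 6) := by
  obtain ⟨δ, hδ, κ, hκ, hκ1, hball⟩ := hcond.exists_ball_subset_compl_closure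
  refine ⟨δ * (1 + 3 * 4 ^ 6 / κ ^ 3), by positivity, δ, hδ, fun x hx hxb => ?_⟩
  have hbΩ : b ∉ Ω := by
    rw [hΩo.frontier_eq] at hb
    exact hb.2
  have hr : 0 < ‖x - b‖ := norm_pos_iff.2 (sub_ne_zero.2 fun h => hbΩ (h ▸ hx))
  obtain ⟨p, hpb, hpΩ⟩ := hball _ hr hxb
  have hpx : ‖p - x‖ ≤ 3 * ‖x - b‖ := by
    linarith [norm_sub_le_norm_sub_add_norm_sub p b x, norm_sub_rev x b]
  calc ∫⁻ z in B \ closure Ω, ENNReal.ofReal (1 / ‖z - x‖ ^ 4)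
      ≤ ∫⁻ z in (closure Ω)ᶜ, ENNReal.ofReal (1 / ‖z - x‖ ^ 4) :=
        lintegral_mono_set (sdiff_subset_compl _ _)
    _ ≤ ENNReal.ofReal ((1 + 3 * 4 ^ 6 / κ ^ 3) * ‖x - b‖ ^ 2) *
          ∫⁻ z in (closure Ω)ᶜ, ENNReal.ofReal (1 / ‖z - x‖ ^ 6) :=
        setLIntegral_one_div_norm_sub_pow_four_le hr hκ hκ1
          (fun h => h (subset_closure hx)) hpx hpΩ
    _ ≤ _ := by
        gcongr ENNReal.ofReal ?_ * _
        have hK : 0 ≤ (1 + 3 * 4 ^ 6 / κ ^ 3) * ‖x - b‖ := by positivity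
        nlinarith [mul_le_mul_of_nonneg_left hxb.le hK]

/-- **The intermediate (Hölder + (B.4)) estimate in the proof of (B.5) of Lemma B.2.**
If `Ω ⊆ ℝ³` is a bounded open set, `b ∈ ∂Ω` satisfies the exterior Lipschitz graph condition,
and `B` is a bounded open set with `closure Ω ⊆ B`, then there exist `C > 0` and `ε > 0` such
that for all `x ∈ Ω` with `‖x − b‖ < ε`,
`∫_{B ∖ closure Ω} ‖z − x‖⁻⁴ dz ≤ C ‖x − b‖ ∫_{ℝ³ ∖ closure Ω} ‖z − x‖⁻⁶ dz`. -/
theorem intermediate_estimate_B5 (Ω : Set (EuclideanSpace ℝ (Fin 3))) (hΩo : IsOpen Ω)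
    (hΩb : Bornology.IsBounded Ω) (b : EuclideanSpace ℝ (Fin 3)) (hb : b ∈ frontier Ω)
    (hcond : ExtLipschitzGraphCond Ω b)
    (B : Set (EuclideanSpace ℝ (Fin 3))) (hBo : IsOpen B) (hBb : Bornology.IsBounded B)
    (hΩB : closure Ω ⊆ B) :
    ∃ C > (0 : ℝ), ∃ ε > (0 : ℝ), ∀ x ∈ Ω, ‖x - b‖ < ε →
      (∫⁻ z in B \ closure Ω, ENNReal.ofReal (1 / ‖z - x‖ ^ 4)) ≤
        ENNReal.ofReal (C * ‖x - b‖) *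
          ∫⁻ z in (closure Ω)ᶜ, ENNReal.ofReal (1 / ‖z - x‖ ^ 6) :=
  intermediate_estimate_B5_general Ω hΩo b hb hcond B
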